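/- For L ≥ 3, every vector z ∈ F₂^{E} with ∂₁ z = 0 and z ∉ im ∂₂ has Hamming weight at least L, and there exists such a vector of Hamming weight exactly L (e.g., the indicator of a horizontal path of L edges crossing from the left boundary column to the right boundary column within a single row). That is, the minimum distance of the planar surface code equals L. -/
import Mathlib


/-- Edge indices of the planar surface code lattice: `Sum.inl (r, c)` is the horizontal
edge joining `(r, c)` and `(r, c+1)` (for `0 ≤ r ≤ L-1`, `0 ≤ c ≤ L-1`); `Sum.inr (r, k)`
is the vertical edge joining `(r, k+1)` and `(r+1, k+1)` (for `0 ≤ r ≤ L-2`,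
`1 ≤ k+1 ≤ L-1`).  In total there are `L² + (L-1)² = 2L² - 2L + 1` edges. -/
abbrev SE (L : ℕ) := (Fin L × Fin L) ⊕ (Fin (L - 1) × Fin (L - 1))

/-- Plaquette indices: plaquette `(r, c)` (for `0 ≤ r ≤ L-2`, `0 ≤ c ≤ L-1`) is the unit
cell with corners `(r,c), (r,c+1), (r+1,c), (r+1,c+1)`. -/
abbrev SP (L : ℕ) := Fin (L - 1) × Fin L

/-- Interior (non-boundary) vertices `V ∖ B`: the pair `(r, k)` stands for the vertex
`(r, k+1)`, i.e. the vertices in columns `1, …, L-1`. -/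
abbrev SV (L : ℕ) := Fin L × Fin (L - 1)

/-- Edge–plaquette incidence matrix over `F₂`: the boundary of a plaquette consists of
its (at most four) sides that belong to the edge set. -/
def sM2 (L : ℕ) : Matrix (SE L) (SP L) (ZMod 2) := fun e q =>
  match e with
  | Sum.inl rc =>
      if (rc.1.val = q.1.val ∨ rc.1.val = q.1.val + 1) ∧ rc.2.val = q.2.val then 1 else 0
  | Sum.inr rk =>
      if rk.1.val = q.1.val ∧ (rk.2.val = q.2.val ∨ rk.2.val + 1 = q.2.val) then 1 else 0

/-- Interior-vertex–edge incidence matrix over `F₂` (a vertex of `B` contributes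
nothing: this is the relative incidence). -/
def sM1 (L : ℕ) : Matrix (SV L) (SE L) (ZMod 2) := fun v e =>
  match e with
  | Sum.inl rc =>
      if rc.1.val = v.1.val ∧ (rc.2.val = v.2.val ∨ rc.2.val = v.2.val + 1) then 1 else 0
  | Sum.inr rk =>
      if rk.2.val = v.2.val ∧ (rk.1.val = v.1.val ∨ rk.1.val + 1 = v.1.val) then 1 else 0

/-- The boundary map `∂₂ : F₂^{P} → F₂^{E}`, sending the indicator of a plaquette to the
sum of the indicators of its boundary edges in `E`. -/
def sD2 (L : ℕ) : (SP L → ZMod 2) →ₗ[ZMod 2] (SE L → ZMod 2) := (sM2 L).mulVecLin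

/-- The relative boundary map `∂₁ : F₂^{E} → F₂^{V∖B}`, sending the indicator of an edge
to the sum of the indicators of its endpoints lying outside `B`. -/
def sD1 (L : ℕ) : (SE L → ZMod 2) →ₗ[ZMod 2] (SV L → ZMod 2) := (sM1 L).mulVecLin

/-- The transpose `∂₁^* : F₂^{E} → F₂^{P}` of `∂₂`. -/
def sD1s (L : ℕ) : (SE L → ZMod 2) →ₗ[ZMod 2] (SP L → ZMod 2) :=
  (Matrix.transpose (sM2 L)).mulVecLin

/-- The transpose `∂₂^* : F₂^{V∖B} → F₂^{E}` of `∂₁`. -/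
def sD2s (L : ℕ) : (SV L → ZMod 2) →ₗ[ZMod 2] (SE L → ZMod 2) :=
  (Matrix.transpose (sM1 L)).mulVecLin

/-- Hamming weight of an `F₂`-vector. -/
def wt {α : Type*} [Fintype α] (x : α → ZMod 2) : ℕ :=
  (Finset.univ.filter fun a => x a ≠ 0).card

/-- Indicator vector of a finite set of coordinates. -/
def ind {α : Type*} [Fintype α] [DecidableEq α] (D : Finset α) : α → ZMod 2 :=
  fun a => if a ∈ D then 1 else 0

lemma sum_ite_fin {n m : ℕ} (hm : m < n) (g : Fin n → ZMod 2) :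
    (∑ r : Fin n, if r.val = m then g r else 0) = g ⟨m, hm⟩ := by
  rw [Finset.sum_congr rfl (fun r _ => show (if r.val = m then g r else 0)
      = (if r = ⟨m, hm⟩ then g r else 0) from by simp [Fin.ext_iff])]
  simp

lemma sum_ite_fin2 {n m₁ m₂ : ℕ} (h1 : m₁ < n) (h2 : m₂ < n) (hne : m₁ ≠ m₂)
    (g : Fin n → ZMod 2) :
    (∑ r : Fin n, if r.val = m₁ ∨ r.val = m₂ then g r else 0)
      = g ⟨m₁, h1⟩ + g ⟨m₂, h2⟩ := by
  have key : ∀ r : Fin n, (if r.val = m₁ ∨ r.val = m₂ then g r else 0)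
      = (if r.val = m₁ then g r else 0) + (if r.val = m₂ then g r else 0) := by
    intro r
    by_cases ha : r.val = m₁ <;> by_cases hb : r.val = m₂ <;> simp_all
  rw [Finset.sum_congr rfl (fun r _ => key r), Finset.sum_add_distrib,
    sum_ite_fin h1 g, sum_ite_fin h2 g]

/-- partial sums -/
lemma PS_zero {n : ℕ} (hn : 0 < n) (g : Fin n → ZMod 2) :
    (∑ r : Fin n, if r.val ≤ 0 then g r else 0) = g ⟨0, hn⟩ := by
  rw [Finset.sum_congr rfl (fun r _ => show (if r.val ≤ 0 then g r else 0)
      = (if r.val = 0 then g r else 0) from by simp [Nat.le_zero])]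
  exact sum_ite_fin hn g

lemma PS_succ {n m : ℕ} (hm : m + 1 < n) (g : Fin n → ZMod 2) :
    (∑ r : Fin n, if r.val ≤ m + 1 then g r else 0)
      = (∑ r : Fin n, if r.val ≤ m then g r else 0) + g ⟨m + 1, hm⟩ := by
  have key : ∀ r : Fin n, (if r.val ≤ m + 1 then g r else 0)
      = (if r.val ≤ m then g r else 0) + (if r.val = m + 1 then g r else 0) := by
    intro r
    by_cases ha : r.val ≤ m <;> by_cases hb : r.val = m + 1
    · omega
    · have : r.val ≤ m + 1 := by omega
      simp [ha, hb, this]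
    · have h1 : r.val ≤ m + 1 := by omega
      have h2 : ¬ r.val ≤ m := ha
      simp [h1, h2, hb]
    · have h1 : ¬ r.val ≤ m + 1 := by omega
      simp [h1, ha, hb]
  rw [Finset.sum_congr rfl (fun r _ => key r), Finset.sum_add_distrib,
    sum_ite_fin hm g]

lemma PS_top {n : ℕ} (g : Fin n → ZMod 2) :
    (∑ r : Fin n, if r.val ≤ n - 1 then g r else 0) = ∑ r : Fin n, g r := by
  refine Finset.sum_congr rfl fun r _ => ?_
  have : r.val ≤ n - 1 := by omega
  simp [this]

/-- Column sum functional. -/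
def fcol (L : ℕ) (c : Fin L) (z : SE L → ZMod 2) : ZMod 2 :=
  ∑ r : Fin L, z (Sum.inl (r, c))

lemma sD2_apply (L : ℕ) (u : SP L → ZMod 2) (e : SE L) :
    sD2 L u e = ∑ q : SP L, sM2 L e q * u q := by
  simp [sD2, Matrix.mulVecLin_apply, Matrix.mulVec, dotProduct]

lemma sD1_apply (L : ℕ) (z : SE L → ZMod 2) (v : SV L) :
    sD1 L z v = ∑ e : SE L, sM1 L v e * z e := by
  simp [sD1, Matrix.mulVecLin_apply, Matrix.mulVec, dotProduct]

/-- `fcol` vanishes on boundaries. -/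
lemma fcol_D2 (L : ℕ) (hL : 3 ≤ L) (c : Fin L) (u : SP L → ZMod 2) :
    fcol L c (sD2 L u) = 0 := by
  unfold fcol
  simp only [sD2_apply]
  rw [Finset.sum_comm]
  have : ∀ q : SP L, (∑ r : Fin L, sM2 L (Sum.inl (r, c)) q * u q) = 0 := by
    intro q
    rw [← Finset.sum_mul]
    have hz : (∑ r : Fin L, sM2 L (Sum.inl (r, c)) q) = 0 := by
      simp only [sM2]
      by_cases hc : c.val = q.2.val
      · rw [Finset.sum_congr rfl (fun r _ => show
          (if (r.val = q.1.val ∨ r.val = q.1.val + 1) ∧ c.val = q.2.val then (1 : ZMod 2) else 0)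
          = (if r.val = q.1.val ∨ r.val = q.1.val + 1 then (1 : ZMod 2) else 0) from by
            simp [hc])]
        rw [sum_ite_fin2 (by omega) (by omega : q.1.val + 1 < L) (by omega)
          (fun _ => (1 : ZMod 2))]
        decide
      · rw [Finset.sum_congr rfl (fun r _ => show
          (if (r.val = q.1.val ∨ r.val = q.1.val + 1) ∧ c.val = q.2.val then (1 : ZMod 2) else 0)
          = 0 from by simp [hc])]
        simp
    rw [hz, zero_mul]
  rw [Finset.sum_congr rfl (fun q _ => this q), Finset.sum_const, smul_zero]

lemma z2_add_eq {a b : ZMod 2} (h : a + b = 0) : a = b := by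
  have := CharTwo.add_eq_iff_eq_add.mp h; simpa using this

lemma sum_ite_one {n : ℕ} (P : Fin n → Prop) [DecidablePred P] {m : ℕ} (hm : m < n)
    (h : ∀ r, P r ↔ r.val = m) (g : Fin n → ZMod 2) :
    (∑ r : Fin n, if P r then g r else 0) = g ⟨m, hm⟩ := by
  rw [Finset.sum_congr rfl (fun r _ => show (if P r then g r else 0)
      = (if r.val = m then g r else 0) from by simp [h r])]
  exact sum_ite_fin hm g

lemma sum_ite_two {n : ℕ} (P : Fin n → Prop) [DecidablePred P] {m₁ m₂ : ℕ}
    (h1 : m₁ < n) (h2 : m₂ < n) (hne : m₁ ≠ m₂)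
    (h : ∀ r, P r ↔ (r.val = m₁ ∨ r.val = m₂)) (g : Fin n → ZMod 2) :
    (∑ r : Fin n, if P r then g r else 0) = g ⟨m₁, h1⟩ + g ⟨m₂, h2⟩ := by
  rw [Finset.sum_congr rfl (fun r _ => show (if P r then g r else 0)
      = (if r.val = m₁ ∨ r.val = m₂ then g r else 0) from by simp [h r])]
  exact sum_ite_fin2 h1 h2 hne g

lemma sum_ite_none {n : ℕ} (P : Fin n → Prop) [DecidablePred P]
    (h : ∀ r, ¬ P r) (g : Fin n → ZMod 2) :
    (∑ r : Fin n, if P r then g r else 0) = 0 := by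
  rw [Finset.sum_congr rfl (fun r _ => show (if P r then g r else 0)
      = 0 from by simp [h r])]
  simp

/-- Summing the vertex relations over a column: adjacent column sums agree. -/
lemma fcol_step (L : ℕ) (hL : 3 ≤ L) (z : SE L → ZMod 2) (h1 : sD1 L z = 0)
    (k : Fin (L - 1)) :
    fcol L ⟨k.val, by omega⟩ z = fcol L ⟨k.val + 1, by omega⟩ z := by
  apply z2_add_eq
  have h0 : (∑ r : Fin L, sD1 L z (r, k)) = 0 := by
    rw [h1]; simp
  rw [Finset.sum_congr rfl (fun r _ => sD1_apply L z (r, k)), Finset.sum_comm] at h0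
  rw [Finset.sum_congr rfl (fun e _ => (Finset.sum_mul ..).symm)] at h0
  rw [Fintype.sum_sum_type] at h0
  -- horizontal part
  have hH : (∑ rc : Fin L × Fin L,
      (∑ r : Fin L, sM1 L (r, k) (Sum.inl rc)) * z (Sum.inl rc))
      = fcol L ⟨k.val, by omega⟩ z + fcol L ⟨k.val + 1, by omega⟩ z := by
    have inner : ∀ rc : Fin L × Fin L, (∑ r : Fin L, sM1 L (r, k) (Sum.inl rc))
        = (if rc.2.val = k.val ∨ rc.2.val = k.val + 1 then 1 else 0) := by
      intro rc
      simp only [sM1]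
      by_cases hc : rc.2.val = k.val ∨ rc.2.val = k.val + 1
      · rw [sum_ite_one _ rc.1.isLt (fun r => by constructor <;> (intro hh; omega))
          (fun _ => (1 : ZMod 2))]
        simp [hc]
      · rw [sum_ite_none _ (fun r => by intro hh; omega) (fun _ => (1 : ZMod 2))]
        simp [hc]
    rw [Finset.sum_congr rfl
      (fun rc _ => by rw [inner rc, ite_mul, one_mul, zero_mul])]
    rw [Fintype.sum_prod_type]
    rw [Finset.sum_congr rfl (fun a _ => by
      rw [sum_ite_two (fun b : Fin L => b.val = k.val ∨ b.val = k.val + 1)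
          (by omega) (by omega : k.val + 1 < L) (by omega)
          (fun b => Iff.rfl) (fun b => z (Sum.inl (a, b)))])]
    rw [Finset.sum_add_distrib]
    rfl
  -- vertical part
  have hV : (∑ rk : Fin (L-1) × Fin (L-1),
      (∑ r : Fin L, sM1 L (r, k) (Sum.inr rk)) * z (Sum.inr rk)) = 0 := by
    have inner : ∀ rk : Fin (L-1) × Fin (L-1),
        (∑ r : Fin L, sM1 L (r, k) (Sum.inr rk)) = 0 := by
      intro rk
      simp only [sM1]
      by_cases hc : rk.2.val = k.val
      · rw [sum_ite_two _ (by omega : rk.1.val < L) (by omega : rk.1.val + 1 < L)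
          (by omega) (fun r => by constructor <;> (intro hh; omega))
          (fun _ => (1 : ZMod 2))]
        decide
      · exact sum_ite_none _ (fun r => by intro hh; omega) _
    rw [Finset.sum_congr rfl (fun rk _ => by rw [inner rk, zero_mul])]
    simp
  rw [hH, hV, add_zero] at h0
  exact h0

lemma fcol_const (L : ℕ) (hL : 3 ≤ L) (z : SE L → ZMod 2) (h1 : sD1 L z = 0)
    (c : Fin L) : fcol L c z = fcol L ⟨0, by omega⟩ z := by
  obtain ⟨m, hm⟩ := c
  induction m with
  | zero => rfl
  | succ n ih =>
    have hn : n < L - 1 := by omega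
    have := fcol_step L hL z h1 ⟨n, hn⟩
    rw [← this]
    exact ih (by omega)

lemma z2_aab (a b : ZMod 2) : a + (a + b) = b := by
  rw [← add_assoc, CharTwo.add_self_eq_zero, zero_add]

lemma z2_abba (a b : ZMod 2) : a + (b + a) = b := by
  rw [add_comm b a, z2_aab]

/-- Explicit primitive: if all column sums vanish and `∂₁ z = 0` then `z = ∂₂ u`. -/
lemma exactness (L : ℕ) (hL : 3 ≤ L) (z : SE L → ZMod 2) (h1 : sD1 L z = 0)
    (hf0 : fcol L ⟨0, by omega⟩ z = 0) : z ∈ LinearMap.range (sD2 L) := by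
  have hfc : ∀ c : Fin L, fcol L c z = 0 := fun c => (fcol_const L hL z h1 c).trans hf0
  set u : SP L → ZMod 2 :=
    fun q => ∑ r : Fin L, if r.val ≤ q.1.val then z (Sum.inl (r, q.2)) else 0 with hu
  refine ⟨u, funext fun e => ?_⟩
  rw [sD2_apply]
  cases e with
  | inl rc =>
    obtain ⟨a, b⟩ := rc
    simp only [sM2, ite_mul, one_mul, zero_mul]
    rw [Fintype.sum_prod_type]
    have inner : ∀ p : Fin (L - 1),
        (∑ c : Fin L, if (a.val = p.val ∨ a.val = p.val + 1) ∧ b.val = c.val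
          then u (p, c) else 0)
        = (if a.val = p.val ∨ a.val = p.val + 1 then u (p, b) else 0) := by
      intro p
      by_cases hp : a.val = p.val ∨ a.val = p.val + 1
      · rw [sum_ite_one _ b.isLt (fun c => by constructor <;> (intro hh; omega))
          (fun c => u (p, c))]
        rw [if_pos hp]
      · rw [sum_ite_none _ (fun c hh => hp hh.1) (fun c => u (p, c)), if_neg hp]
    rw [Finset.sum_congr rfl (fun p _ => inner p)]
    by_cases ha0 : a.val = 0
    · rw [sum_ite_one _ (show 0 < L - 1 by omega)
        (fun p => by constructor <;> (intro hh; omega)) (fun p => u (p, b))]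
      rw [show a = ⟨0, by omega⟩ from Fin.ext ha0]
      exact PS_zero (by omega) (fun r => z (Sum.inl (r, b)))
    · by_cases haL : a.val = L - 1
      · rw [sum_ite_one _ (show L - 2 < L - 1 by omega)
          (fun p => by constructor <;> (intro hh; omega)) (fun p => u (p, b))]
        have htop : (∑ r : Fin L, if r.val ≤ L - 2 + 1 then z (Sum.inl (r, b)) else 0)
            = 0 := by
          rw [Finset.sum_congr rfl (fun r _ =>
            if_congr (show r.val ≤ L - 2 + 1 ↔ r.val ≤ L - 1 by omega) rfl rfl),
            PS_top (fun r => z (Sum.inl (r, b)))]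
          exact hfc b
        have hstep := PS_succ (show L - 2 + 1 < L by omega) (fun r => z (Sum.inl (r, b)))
        rw [hstep] at htop
        have ha' : (⟨L - 2 + 1, show L - 2 + 1 < L by omega⟩ : Fin L) = a :=
          Fin.ext (by simp only [Fin.val_mk]; omega)
        exact (z2_add_eq htop).trans
          (congrArg (fun t : Fin L => z (Sum.inl (t, b))) ha')
      · have hstep := PS_succ (show (a.val - 1) + 1 < L by omega)
          (fun r => z (Sum.inl (r, b)))
        rw [sum_ite_two _ (show a.val - 1 < L - 1 by omega)
          (show a.val < L - 1 by omega) (by omega)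
          (fun p => by constructor <;> (intro hh; omega)) (fun p => u (p, b))]
        have h2 : (∑ r : Fin L, if r.val ≤ a.val then z (Sum.inl (r, b)) else 0)
            = ∑ r : Fin L, if r.val ≤ a.val - 1 + 1 then z (Sum.inl (r, b)) else 0 :=
          Finset.sum_congr rfl (fun r _ => if_congr (by omega) rfl rfl)
        show (∑ r : Fin L, if r.val ≤ a.val - 1 then z (Sum.inl (r, b)) else 0)
            + (∑ r : Fin L, if r.val ≤ a.val then z (Sum.inl (r, b)) else 0)
            = z (Sum.inl (a, b))
        rw [h2, hstep, z2_aab]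
        exact congrArg (fun t : Fin L => z (Sum.inl (t, b)))
          (Fin.ext (show a.val - 1 + 1 = a.val by omega)).symm |>.symm
  | inr rk =>
    obtain ⟨a, k⟩ := rk
    have hkL : k.val < L := by omega
    have hk1L : k.val + 1 < L := by omega
    simp only [sM2, ite_mul, one_mul, zero_mul]
    rw [Fintype.sum_prod_type]
    have inner : ∀ p : Fin (L - 1),
        (∑ c : Fin L, if a.val = p.val ∧ (k.val = c.val ∨ k.val + 1 = c.val)
          then u (p, c) else 0)
        = (if p.val = a.val then u (p, ⟨k.val, hkL⟩) + u (p, ⟨k.val + 1, hk1L⟩)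
            else 0) := by
      intro p
      by_cases hp : a.val = p.val
      · rw [sum_ite_two _ hkL hk1L (by omega)
          (fun c => by constructor <;> (intro hh; omega)) (fun c => u (p, c))]
        rw [if_pos hp.symm]
      · rw [sum_ite_none _ (fun c hh => hp hh.1) (fun c => u (p, c)),
          if_neg (fun hh => hp hh.symm)]
    rw [Finset.sum_congr rfl (fun p _ => inner p)]
    rw [sum_ite_one (fun p : Fin (L - 1) => p.val = a.val) a.isLt (fun p => Iff.rfl)
      (fun p => u (p, ⟨k.val, hkL⟩) + u (p, ⟨k.val + 1, hk1L⟩))]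
    -- vertex relations
    have vrel : ∀ r : Fin L,
        (z (Sum.inl (r, ⟨k.val, hkL⟩)) + z (Sum.inl (r, ⟨k.val + 1, hk1L⟩)))
        + (∑ x1 : Fin (L - 1),
            if x1.val = r.val ∨ x1.val + 1 = r.val then z (Sum.inr (x1, k)) else 0)
        = 0 := by
      intro r
      have h0 : sD1 L z (r, k) = 0 := by rw [h1]; rfl
      rw [sD1_apply, Fintype.sum_sum_type] at h0
      have hH : (∑ rc : Fin L × Fin L, sM1 L (r, k) (Sum.inl rc) * z (Sum.inl rc))
          = z (Sum.inl (r, ⟨k.val, hkL⟩)) + z (Sum.inl (r, ⟨k.val + 1, hk1L⟩)) := by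
        simp only [sM1, ite_mul, one_mul, zero_mul]
        rw [Fintype.sum_prod_type]
        have inn : ∀ a' : Fin L,
            (∑ b' : Fin L, if a'.val = r.val ∧ (b'.val = k.val ∨ b'.val = k.val + 1)
              then z (Sum.inl (a', b')) else 0)
            = (if a'.val = r.val
                then z (Sum.inl (a', ⟨k.val, hkL⟩)) + z (Sum.inl (a', ⟨k.val + 1, hk1L⟩))
                else 0) := by
          intro a'
          by_cases hp : a'.val = r.val
          · rw [sum_ite_two _ hkL hk1L (by omega)
              (fun b' => by constructor <;> (intro hh; omega))
              (fun b' => z (Sum.inl (a', b')))]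
            rw [if_pos hp]
          · rw [sum_ite_none _ (fun b' hh => hp hh.1) (fun b' => z (Sum.inl (a', b'))),
              if_neg hp]
        rw [Finset.sum_congr rfl (fun a' _ => inn a')]
        rw [sum_ite_one (fun a' : Fin L => a'.val = r.val) r.isLt (fun _ => Iff.rfl)
          (fun a' => z (Sum.inl (a', ⟨k.val, hkL⟩)) + z (Sum.inl (a', ⟨k.val + 1, hk1L⟩)))]
      have hV : (∑ x : Fin (L - 1) × Fin (L - 1), sM1 L (r, k) (Sum.inr x) * z (Sum.inr x))
          = ∑ x1 : Fin (L - 1),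
              if x1.val = r.val ∨ x1.val + 1 = r.val then z (Sum.inr (x1, k)) else 0 := by
        simp only [sM1, ite_mul, one_mul, zero_mul]
        rw [Fintype.sum_prod_type]
        have innV : ∀ x1 : Fin (L - 1),
            (∑ x2 : Fin (L - 1), if x2.val = k.val ∧ (x1.val = r.val ∨ x1.val + 1 = r.val)
              then z (Sum.inr (x1, x2)) else 0)
            = (if x1.val = r.val ∨ x1.val + 1 = r.val then z (Sum.inr (x1, k)) else 0) := by
          intro x1
          by_cases hp : x1.val = r.val ∨ x1.val + 1 = r.val
          · rw [sum_ite_one _ k.isLt (fun x2 => by constructor <;> (intro hh; omega))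
              (fun x2 => z (Sum.inr (x1, x2)))]
            rw [if_pos hp]
          · rw [sum_ite_none _ (fun x2 hh => hp hh.2) (fun x2 => z (Sum.inr (x1, x2))),
              if_neg hp]
        exact Finset.sum_congr rfl fun x1 _ => innV x1
      rw [hH, hV] at h0
      exact h0
    -- telescoping claim
    have claim : ∀ m (hm : m < L - 1),
        (∑ r : Fin L, if r.val ≤ m
            then z (Sum.inl (r, ⟨k.val, hkL⟩)) + z (Sum.inl (r, ⟨k.val + 1, hk1L⟩))
            else 0)
          = z (Sum.inr (⟨m, hm⟩, k)) := by
      intro m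
      induction m with
      | zero =>
        intro hm
        have h0 := vrel ⟨0, by omega⟩
        rw [sum_ite_one _ (show (0 : ℕ) < L - 1 by omega)
          (fun x1 => by simp only [Fin.val_mk]; constructor <;> (intro hh; omega))
          (fun x1 => z (Sum.inr (x1, k)))] at h0
        rw [PS_zero (by omega : 0 < L)
          (fun r => z (Sum.inl (r, ⟨k.val, hkL⟩)) + z (Sum.inl (r, ⟨k.val + 1, hk1L⟩)))]
        exact z2_add_eq h0
      | succ n ih =>
        intro hm
        rw [PS_succ (show n + 1 < L by omega)
          (fun r => z (Sum.inl (r, ⟨k.val, hkL⟩)) + z (Sum.inl (r, ⟨k.val + 1, hk1L⟩))),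
          ih (by omega)]
        have h0 := vrel ⟨n + 1, by omega⟩
        rw [sum_ite_two _ (show n + 1 < L - 1 from hm) (show n < L - 1 by omega)
          (by omega) (fun x1 => by simp only [Fin.val_mk]; constructor <;> (intro hh; omega))
          (fun x1 => z (Sum.inr (x1, k)))] at h0
        rw [z2_add_eq h0, z2_abba]
    -- combine the two partial sums
    have merge :
        u (a, ⟨k.val, hkL⟩) + u (a, ⟨k.val + 1, hk1L⟩)
        = ∑ r : Fin L, if r.val ≤ a.val
            then z (Sum.inl (r, ⟨k.val, hkL⟩)) + z (Sum.inl (r, ⟨k.val + 1, hk1L⟩))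
            else 0 := by
      show (∑ r : Fin L, if r.val ≤ a.val then z (Sum.inl (r, ⟨k.val, hkL⟩)) else 0)
          + (∑ r : Fin L, if r.val ≤ a.val then z (Sum.inl (r, ⟨k.val + 1, hk1L⟩)) else 0)
          = _
      rw [← Finset.sum_add_distrib]
      exact Finset.sum_congr rfl fun r _ => by by_cases hr : r.val ≤ a.val <;> simp [hr]
    rw [merge, claim a.val a.isLt]


/-- **Minimum distance of the planar surface code.**
For `L ≥ 3`, every relative cycle that is not a relative boundary (`∂₁ z = 0`,
`z ∉ im ∂₂`) has Hamming weight at least `L`, and some such vector has Hamming weight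
exactly `L`; i.e. the minimum distance of the planar surface code equals `L`. -/
theorem planar_minimum_distance
    (L : ℕ) (hL : 3 ≤ L) :
    (∀ z : SE L → ZMod 2,
        sD1 L z = 0 → z ∉ LinearMap.range (sD2 L) → L ≤ wt z) ∧
    (∃ z : SE L → ZMod 2,
        sD1 L z = 0 ∧ z ∉ LinearMap.range (sD2 L) ∧ wt z = L) := by
  constructor
  · -- lower bound
    intro z hz hnr
    have hne : fcol L ⟨0, by omega⟩ z ≠ 0 := fun h0 => hnr (exactness L hL z hz h0)
    have hcol : ∀ c : Fin L, ∃ r : Fin L, z (Sum.inl (r, c)) ≠ 0 := by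
      intro c
      by_contra hno
      push_neg at hno
      have h0 : fcol L c z = 0 := by
        unfold fcol
        rw [Finset.sum_congr rfl fun r _ => hno r]
        simp
      exact hne ((fcol_const L hL z hz c).symm.trans h0)
    choose rs hrs using hcol
    have hle := Finset.card_le_card_of_injOn
      (s := (Finset.univ : Finset (Fin L)))
      (f := fun c : Fin L => (Sum.inl (rs c, c) : SE L))
      (t := Finset.univ.filter fun e : SE L => z e ≠ 0)
      (fun c _ => Finset.mem_filter.mpr ⟨Finset.mem_univ _, hrs c⟩)
      (fun c1 _ c2 _ h => by
        have hh : rs c1 = rs c2 ∧ c1 = c2 := by simpa using h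
        exact hh.2)
    unfold wt
    simpa using hle
  · -- existence: the horizontal path in row 0
    refine ⟨fun e => Sum.elim
        (fun rc : Fin L × Fin L => if rc.1.val = 0 then (1 : ZMod 2) else 0)
        (fun _ => 0) e, ?_, ?_, ?_⟩
    · -- relative cycle
      funext v
      obtain ⟨r, k⟩ := v
      rw [sD1_apply, Fintype.sum_sum_type]
      have hV : (∑ x : Fin (L - 1) × Fin (L - 1), sM1 L (r, k) (Sum.inr x) *
          Sum.elim (fun rc : Fin L × Fin L => if rc.1.val = 0 then (1 : ZMod 2) else 0)
            (fun _ => 0) ((Sum.inr x : SE L))) = 0 := by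
        simp
      have hH : (∑ rc : Fin L × Fin L, sM1 L (r, k) (Sum.inl rc) *
          Sum.elim (fun rc : Fin L × Fin L => if rc.1.val = 0 then (1 : ZMod 2) else 0)
            (fun _ => 0) ((Sum.inl rc : SE L))) = 0 := by
        simp only [sM1, Sum.elim_inl, ite_mul, one_mul, zero_mul]
        rw [Fintype.sum_prod_type]
        have inn : ∀ a' : Fin L,
            (∑ b' : Fin L, if a'.val = r.val ∧ (b'.val = k.val ∨ b'.val = k.val + 1)
              then (if a'.val = 0 then (1 : ZMod 2) else 0) else 0) = 0 := by
          intro a'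
          by_cases hp : a'.val = r.val
          · rw [sum_ite_two _ (show k.val < L by omega) (show k.val + 1 < L by omega)
              (by omega) (fun b' => by constructor <;> (intro hh; omega))
              (fun b' => if a'.val = 0 then (1 : ZMod 2) else 0)]
            exact CharTwo.add_self_eq_zero _
          · exact sum_ite_none _ (fun b' hh => hp hh.1) _
        rw [Finset.sum_congr rfl fun a' _ => inn a']
        simp
      rw [hH, hV]
      simp
    · -- not a boundary
      rintro ⟨u, hu⟩
      have h0 := fcol_D2 L hL ⟨0, by omega⟩ u
      rw [hu] at h0
      have h1 : fcol L ⟨0, by omega⟩ (fun e => Sum.elim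
          (fun rc : Fin L × Fin L => if rc.1.val = 0 then (1 : ZMod 2) else 0)
          (fun _ => 0) e) = 1 := by
        unfold fcol
        simp only [Sum.elim_inl]
        rw [sum_ite_fin (show 0 < L by omega) (fun _ => (1 : ZMod 2))]
      rw [h1] at h0
      exact one_ne_zero h0
    · -- weight is exactly L
      unfold wt
      have himg : (Finset.univ.filter fun e : SE L =>
          (fun e => Sum.elim
            (fun rc : Fin L × Fin L => if rc.1.val = 0 then (1 : ZMod 2) else 0)
            (fun _ => 0) e) e ≠ 0)
          = Finset.univ.image
              (fun c : Fin L => (Sum.inl (⟨0, by omega⟩, c) : SE L)) := by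
        ext e
        simp only [Finset.mem_filter, Finset.mem_univ, true_and, Finset.mem_image]
        cases e with
        | inl rc =>
          obtain ⟨aa, bb⟩ := rc
          simp only [Sum.elim_inl]
          constructor
          · intro hne
            have ha : aa = (⟨0, by omega⟩ : Fin L) := by
              by_contra hc
              have : ¬ aa.val = 0 := fun hv => hc (Fin.ext hv)
              simp [this] at hne
            exact ⟨bb, by rw [ha]⟩
          · rintro ⟨c, hc⟩
            have hh : (⟨0, by omega⟩ : Fin L) = aa ∧ c = bb := by
              simpa [Prod.ext_iff] using hc
            rw [← hh.1]
            simp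
        | inr x =>
          simp
      rw [himg, Finset.card_image_of_injective _ (fun c1 c2 h => by simpa using h)]
      simp
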